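/- Let m ≥ 1, let O ⊆ ℝ^m be a nonempty open convex set, let f, g : O → ℝ be convex, and let X ⊆ O be a nonempty compact convex set. Suppose (f_t)_{t∈T_f} and (g_t)_{t∈T_g} are lower-C² representations of f and g on an open set O' with X ⊆ O' ⊆ O, and let K_f ≥ 0 and K_g ≥ 0 be such that every ∇f_t (t ∈ T_f) and every ∇g_t (t ∈ T_g) is, respectively, K_f- and K_g-Lipschitz on X. Let L_f ≥ 0 and L_g ≥ 0 be such that ‖v‖ ≤ L_f for all v ∈ ∂f(x), x ∈ X, and ‖v‖ ≤ L_g for all v ∈ ∂g(x), x ∈ X. Let Y = (y₀, y₁, ..., y_m) be a poised tuple with y₀ ∈ X, set Δ = max_{1≤i≤m} ‖y_i − y₀‖, and suppose B(y₀; Δ) ⊆ X. Fix ε > 0 and let x ∈ B(y₀; Δ). Choose t₁,...,t_r in the active set A_f(x) of the representation of f with convex weights λ ∈ ℝ^r, and t̄₁,...,t̄_{r̄} in the active set A_g(x) of the representation of g with convex weights λ̄ ∈ ℝ^{r̄}; set v_f(x) = Σ λ_i ∇f_{t_i}(x), V_f(x) = Σ λ_i ∇F_{t_i}(x), v_g(x)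 = Σ λ̄_i ∇g_{t̄_i}(x), V_g(x) = Σ λ̄_i ∇G_{t̄_i}(x), where F_{t_i} and G_{t̄_i} are the linear interpolation models of f_{t_i} and g_{t̄_i} over Y. Define e(x) = v_f(x) if g(x) ≤ ε and e(x) = v_g(x) otherwise, and E(x) = V_f(x) if g(x) ≤ ε and E(x) = V_g(x) otherwise. Then, with κ = max{K_f, K_g}·(1 + √m·‖L̂⁻¹‖/2): (i) ‖e(x) − E(x)‖ ≤ κ·Δ, and (ii) ‖E(x)‖ ≤ max{L_f, L_g} + κ·Δ. -/

import Mathlib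

open scoped RealInnerProductSpace

/-- The subdifferential of `f : O → ℝ` at `x`:
`∂f(x) = {v : f(y) ≥ f(x) + ⟪v, y - x⟫ for all y ∈ O}`. -/
def subdiff {m : ℕ} (O : Set (EuclideanSpace ℝ (Fin m)))
    (f : EuclideanSpace ℝ (Fin m) → ℝ) (x : EuclideanSpace ℝ (Fin m)) :
    Set (EuclideanSpace ℝ (Fin m)) :=
  {v | ∀ y ∈ O, f x + ⟪v, y - x⟫ ≤ f y}

/-- `(ft t)_{t ∈ T}` is a lower-C² representation of `f` on the set `V`: each `ft t`
is C² on `V`, the values, gradients and Hessians depend continuously on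
`(t, x) ∈ T × V`, and `f = max_{t ∈ T} ft t` on `V` (the maximum being attained). -/
def IsLowerC2Rep {m : ℕ} (T : Type) [TopologicalSpace T]
    (f : EuclideanSpace ℝ (Fin m) → ℝ)
    (ft : T → EuclideanSpace ℝ (Fin m) → ℝ)
    (V : Set (EuclideanSpace ℝ (Fin m))) : Prop :=
  (∀ t : T, ContDiffOn ℝ 2 (ft t) V) ∧
  ContinuousOn (fun p : T × EuclideanSpace ℝ (Fin m) => ft p.1 p.2)
    (Set.univ ×ˢ V) ∧
  ContinuousOn (fun p : T × EuclideanSpace ℝ (Fin m) => gradient (ft p.1) p.2)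
    (Set.univ ×ˢ V) ∧
  ContinuousOn
    (fun p : T × EuclideanSpace ℝ (Fin m) => fderiv ℝ (gradient (ft p.1)) p.2)
    (Set.univ ×ˢ V) ∧
  (∀ x ∈ V, (∀ t : T, ft t x ≤ f x) ∧ (∃ t : T, ft t x = f x))

/-- A tuple `Y = (y₀, …, y_m)` of points of `ℝ^m` is poised if the `(m+1)×(m+1)` matrix
whose `i`-th row is `(1, yᵢ)` is invertible. -/
def Poised {m : ℕ} (Y : Fin (m + 1) → EuclideanSpace ℝ (Fin m)) : Prop :=
  (Matrix.of fun i : Fin (m + 1) => Fin.cons (1 : ℝ) (fun j : Fin m => Y i j)).det ≠ 0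

/-- The spectral norm of a square real matrix, i.e. the operator norm of the induced
map on Euclidean space. -/
noncomputable def specNorm {n : ℕ} (M : Matrix (Fin n) (Fin n) ℝ) : ℝ :=
  ‖(Matrix.toEuclideanCLM (𝕜 := ℝ) M :
      EuclideanSpace ℝ (Fin n) →L[ℝ] EuclideanSpace ℝ (Fin n))‖

/-- The matrix `L(Y)` whose `i`-th row is `yᵢ - y₀`, for `i = 1, …, m`. -/
noncomputable def Lmat {m : ℕ} (Y : Fin (m + 1) → EuclideanSpace ℝ (Fin m)) :
    Matrix (Fin m) (Fin m) ℝ :=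
  Matrix.of fun i j : Fin m => (Y i.succ - Y 0) j

/-!
The model gradient `a` of the interpolant of a piece `h = fₜ` is compared with `∇h(x)` through
the base point `y₀`. Lipschitz continuity of `∇h` gives `‖∇h(x) - ∇h(y₀)‖ ≤ KΔ`. Since the affine
model agrees with `h` at `y₀` and `yᵢ`, the pairing `⟪yᵢ - y₀, ∇h(y₀) - a⟫` is minus the first-order
Taylor remainder of `h` between `y₀` and `yᵢ`, which the Lipschitz gradient bounds by `KΔ²/2`; so
every coordinate of `L̂ (∇h(y₀) - a)` is at most `KΔ/2` and `‖∇h(y₀) - a‖ ≤ ‖L̂⁻¹‖ √m KΔ/2`.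
Convex weights preserve these bounds, which gives (i). Gradients of active pieces of a convex
function are subgradients, so `‖e(x)‖ ≤ L`, and (ii) follows from (i) by the triangle inequality.
-/

section NormedSpace

variable {E : Type*} [SeminormedAddCommGroup E] [NormedSpace ℝ E]

theorem norm_sum_smul_le_of_norm_le {ι : Type*} [Fintype ι] {w : ι → ℝ}
    (hw₀ : ∀ i, 0 ≤ w i) (hw₁ : ∑ i, w i = 1) {v : ι → E} {c : ℝ} (hv : ∀ i, ‖v i‖ ≤ c) :
    ‖∑ i, w i • v i‖ ≤ c := by
  simpa using (convex_closedBall (0 : E) c).sum_mem (fun i _ => hw₀ i) hw₁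
    (fun i _ => by simpa using hv i)

end NormedSpace

section InnerProductSpace

variable {E : Type*} [NormedAddCommGroup E] [InnerProductSpace ℝ E] [CompleteSpace E]

theorem gradient_const_add_inner (a₀ : ℝ) (a x : E) :
    gradient (fun z => a₀ + ⟪a, z⟫) x = a := by
  have h := ((innerSL ℝ a).hasFDerivAt (x := x)).const_add a₀
  rw [hasFDerivAt_iff_hasGradientAt] at h
  exact h.gradient.trans ((InnerProductSpace.toDual ℝ E).symm_apply_apply a)

theorem abs_sub_sub_inner_gradient_le {X : Set E} (hX : Convex ℝ X) {h : E → ℝ}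
    (hd : ∀ p ∈ X, DifferentiableAt ℝ h p) {K : ℝ}
    (hlip : ∀ p ∈ X, ∀ q ∈ X, ‖gradient h p - gradient h q‖ ≤ K * ‖p - q‖) {u w : E}
    (hu : u ∈ X) (hw : w ∈ X) :
    |h w - h u - ⟪gradient h u, w - u⟫| ≤ K / 2 * ‖w - u‖ ^ 2 := by
  set d := w - u
  let γ : ℝ → E := fun t => u + t • d
  have hγX : ∀ t ∈ Set.Icc (0 : ℝ) 1, γ t ∈ X := fun t ht => by
    simpa [γ, d] using hX.add_smul_sub_mem hu hw ht
  let φ : ℝ → ℝ := fun t => h (γ t) - h u - t * ⟪gradient h u, d⟫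
  have hφ : ∀ t ∈ Set.Icc (0 : ℝ) 1, HasDerivAt φ ⟪gradient h (γ t) - gradient h u, d⟫ t := by
    intro t ht
    have hγ : HasDerivAt γ d t := by
      simpa only [one_smul] using ((hasDerivAt_id' t).smul_const d).const_add u
    have := (((hd _ (hγX t ht)).hasFDerivAt.comp_hasDerivAt t hγ).sub_const (h u)).sub
      ((hasDerivAt_id' t).mul_const ⟪gradient h u, d⟫)
    rwa [one_mul, ← inner_gradient_left, ← inner_sub_left] at this
  have hbound : ∀ t ∈ Set.Ico (0 : ℝ) 1,
      ‖⟪gradient h (γ t) - gradient h u, d⟫‖ ≤ K * ‖d‖ ^ 2 / 2 * (2 * t) := by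
    intro t ht
    have hγu : ‖γ t - u‖ = t * ‖d‖ := by simp [γ, norm_smul, abs_of_nonneg ht.1]
    calc ‖⟪gradient h (γ t) - gradient h u, d⟫‖
        ≤ ‖gradient h (γ t) - gradient h u‖ * ‖d‖ := norm_inner_le_norm _ _
      _ ≤ K * (t * ‖d‖) * ‖d‖ := by
        gcongr
        simpa [hγu] using hlip _ (hγX t (Set.Ico_subset_Icc_self ht)) u hu
      _ = K * ‖d‖ ^ 2 / 2 * (2 * t) := by ring
  -- compare the remainder `φ` along the segment with the barrier `t ↦ K‖d‖²t²/2`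
  have hremainder := image_norm_le_of_norm_deriv_right_le_deriv_boundary
    (fun t ht => (hφ t ht).continuousAt.continuousWithinAt)
    (fun t ht => (hφ t (Set.Ico_subset_Icc_self ht)).hasDerivWithinAt)
    (B := fun t => K * ‖d‖ ^ 2 / 2 * t ^ 2) (by simp [φ, γ])
    (fun t => by simpa using (hasDerivAt_pow 2 t).const_mul (K * ‖d‖ ^ 2 / 2)) hbound
    (Set.right_mem_Icc.2 zero_le_one)
  simpa [φ, γ, d, mul_div_right_comm] using hremainder

end InnerProductSpace

variable {m : ℕ}

theorem gradient_mem_subdiff_of_eventually_le {O : Set (EuclideanSpace ℝ (Fin m))}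
    {f φ : EuclideanSpace ℝ (Fin m) → ℝ} (hf : ConvexOn ℝ O f)
    {x : EuclideanSpace ℝ (Fin m)} (hxO : x ∈ O) (hle : ∀ᶠ z in nhds x, φ z ≤ f z)
    (heq : φ x = f x) (hφ : DifferentiableAt ℝ φ x) :
    gradient φ x ∈ subdiff O f x := by
  intro y hy
  set d := y - x
  -- Fermat's rule for `k`: by convexity of `f`, `k` peaks at `t = 0` on `t ≥ 0`
  let k : ℝ → ℝ := fun t => φ (x + t • d) - t * (f y - f x)
  have hk : HasDerivAt k (⟪gradient φ x, d⟫ - (f y - f x)) 0 := by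
    have hline : HasDerivAt (fun t : ℝ => x + t • d) d 0 := by
      simpa only [one_smul] using ((hasDerivAt_id' (0 : ℝ)).smul_const d).const_add x
    have hφ' : HasFDerivAt φ (fderiv ℝ φ x) (x + (0 : ℝ) • d) := by
      simpa using hφ.hasFDerivAt
    have := (hφ'.comp_hasDerivAt 0 hline).sub ((hasDerivAt_id' (0 : ℝ)).mul_const (f y - f x))
    rwa [one_mul, ← inner_gradient_left] at this
  have hline : Filter.Tendsto (fun t : ℝ => x + t • d) (nhds 0) (nhds x) :=
    (by fun_prop : Continuous fun t : ℝ => x + t • d).tendsto' 0 x (by simp)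
  have hmax : IsLocalMaxOn k (Set.Ici 0) 0 := by
    filter_upwards [nhdsWithin_le_nhds (hline.eventually hle), self_mem_nhdsWithin,
      nhdsWithin_le_nhds (Iio_mem_nhds one_pos)] with t hφt (ht₀ : 0 ≤ t) (ht₁ : t < 1)
    have hconv : f (x + t • d) ≤ (1 - t) * f x + t * f y := by
      have := hf.2 hxO hy (show 0 ≤ 1 - t by linarith) ht₀ (by ring)
      rwa [show (1 - t) • x + t • y = x + t • d by simp only [d]; module] at this
    simp only [k, zero_smul, add_zero, zero_mul, sub_zero, heq]
    linarith
  have := hmax.hasFDerivWithinAt_nonpos hk.hasFDerivAt.hasFDerivWithinAt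
    (mem_posTangentConeAt_of_segment_subset (by simp [segment_eq_Icc, Set.Icc_subset_Ici_self]) :
      (1 : ℝ) ∈ _)
  simp only [ContinuousLinearMap.toSpanSingleton_apply, smul_eq_mul, one_mul] at this
  linarith

theorem Poised.det_Lmat_ne_zero {Y : Fin (m + 1) → EuclideanSpace ℝ (Fin m)} (hY : Poised Y) :
    (Lmat Y).det ≠ 0 := by
  let M : Matrix (Fin (m + 1)) (Fin (m + 1)) ℝ :=
    Matrix.of fun i => Fin.cons (1 : ℝ) fun j : Fin m => Y i j
  -- subtract row `0` from the other rows, then expand along the first column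
  let c : Fin (m + 1) → ℝ := fun i => if i = 0 then 0 else 1
  let N : Matrix (Fin (m + 1)) (Fin (m + 1)) ℝ := Matrix.of fun i j => M i j - c i * M 0 j
  have hMN : M.det = N.det :=
    Matrix.det_eq_of_forall_row_eq_smul_add_const c 0 (by simp [c]) fun i j => by
      simp [N, c]
  have hN : N.det = (Lmat Y).det := by
    rw [Matrix.det_succ_column_zero, Fin.sum_univ_succ]
    simp [N, M, c, Lmat, Matrix.submatrix, Fin.succ_ne_zero]
  rwa [← hN, ← hMN]

theorem Poised.pos_of_isGreatest {Y : Fin (m + 1) → EuclideanSpace ℝ (Fin m)} (hY : Poised Y)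
    {Δ : ℝ} (hΔ : IsGreatest (Set.range fun i : Fin m => ‖Y i.succ - Y 0‖) Δ) : 0 < Δ := by
  obtain ⟨i, rfl⟩ := hΔ.1
  refine norm_pos_iff.2 fun h => hY.det_Lmat_ne_zero ?_
  exact Matrix.det_eq_zero_of_row_eq_zero i fun j => by rw [Lmat, Matrix.of_apply, h]; rfl

theorem EuclideanSpace.norm_le_sqrt_card_mul {ι : Type*} [Fintype ι] {v : EuclideanSpace ℝ ι}
    {c : ℝ} (hc : 0 ≤ c) (hv : ∀ i, |v i| ≤ c) : ‖v‖ ≤ √(Fintype.card ι) * c := by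
  rw [EuclideanSpace.norm_eq, ← Real.sqrt_sq hc, ← Real.sqrt_mul (Nat.cast_nonneg _)]
  gcongr
  calc ∑ i, ‖v i‖ ^ 2 ≤ ∑ _i : ι, c ^ 2 := by
        gcongr with i; simpa [Real.norm_eq_abs] using hv i
    _ = Fintype.card ι * c ^ 2 := by simp

theorem specNorm_nonneg {n : ℕ} (M : Matrix (Fin n) (Fin n) ℝ) : 0 ≤ specNorm M := norm_nonneg _

theorem norm_le_specNorm_inv_mul {n : ℕ} {M : Matrix (Fin n) (Fin n) ℝ} (hM : M.det ≠ 0)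
    (w : EuclideanSpace ℝ (Fin n)) :
    ‖w‖ ≤ specNorm M⁻¹ * ‖Matrix.toEuclideanCLM (𝕜 := ℝ) M w‖ := by
  have hw : Matrix.toEuclideanCLM (𝕜 := ℝ) M⁻¹ (Matrix.toEuclideanCLM (𝕜 := ℝ) M w) = w := by
    have := Matrix.nonsing_inv_mul M (isUnit_iff_ne_zero.2 hM)
    simpa using congr(Matrix.toEuclideanCLM (𝕜 := ℝ) $this w)
  calc ‖w‖ = ‖Matrix.toEuclideanCLM (𝕜 := ℝ) M⁻¹ (Matrix.toEuclideanCLM (𝕜 := ℝ) M w)‖ := by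
        rw [hw]
    _ ≤ specNorm M⁻¹ * ‖Matrix.toEuclideanCLM (𝕜 := ℝ) M w‖ := ContinuousLinearMap.le_opNorm _ _

theorem toEuclideanCLM_Lmat_apply (Y : Fin (m + 1) → EuclideanSpace ℝ (Fin m))
    (w : EuclideanSpace ℝ (Fin m)) (i : Fin m) :
    Matrix.toEuclideanCLM (𝕜 := ℝ) (Lmat Y) w i = ⟪Y i.succ - Y 0, w⟫ := by
  simp [Matrix.mulVec, dotProduct, Lmat, PiLp.inner_apply, mul_comm]

theorem toEuclideanCLM_smul_Lmat_apply (Y : Fin (m + 1) → EuclideanSpace ℝ (Fin m)) (c : ℝ)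
    (w : EuclideanSpace ℝ (Fin m)) (i : Fin m) :
    Matrix.toEuclideanCLM (𝕜 := ℝ) (c • Lmat Y) w i = c * ⟪Y i.succ - Y 0, w⟫ := by
  simp only [map_smul, FunLike.coe_smul, Pi.smul_apply, PiLp.smul_apply,
    toEuclideanCLM_Lmat_apply, smul_eq_mul]

theorem norm_gradient_sub_le_of_interpolates {X : Set (EuclideanSpace ℝ (Fin m))}
    (hX : Convex ℝ X) {h : EuclideanSpace ℝ (Fin m) → ℝ} (hd : ∀ p ∈ X, DifferentiableAt ℝ h p)
    {K : ℝ} (hK : 0 ≤ K) (hlip : ∀ p ∈ X, ∀ q ∈ X, ‖gradient h p - gradient h q‖ ≤ K * ‖p - q‖)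
    {Y : Fin (m + 1) → EuclideanSpace ℝ (Fin m)} (hY : Poised Y) {Δ : ℝ}
    (hΔ : IsGreatest (Set.range fun i : Fin m => ‖Y i.succ - Y 0‖) Δ)
    (hball : Metric.closedBall (Y 0) Δ ⊆ X) {a₀ : ℝ} {a : EuclideanSpace ℝ (Fin m)}
    (hinterp : ∀ j, a₀ + ⟪a, Y j⟫ = h (Y j)) {x : EuclideanSpace ℝ (Fin m)}
    (hx : x ∈ Metric.closedBall (Y 0) Δ) :
    ‖gradient h x - a‖ ≤ K * (1 + √m * specNorm (Δ⁻¹ • Lmat Y)⁻¹ / 2) * Δ := by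
  have hΔ0 : 0 < Δ := hY.pos_of_isGreatest hΔ
  have hY0 : Y 0 ∈ X := hball (Metric.mem_closedBall_self hΔ0.le)
  have hrow : ∀ i : Fin m, |Δ⁻¹ * ⟪Y i.succ - Y 0, gradient h (Y 0) - a⟫| ≤ K * Δ / 2 := by
    intro i
    have hYi : ‖Y i.succ - Y 0‖ ≤ Δ := hΔ.2 ⟨i, rfl⟩
    have htaylor := abs_sub_sub_inner_gradient_le hX hd hlip hY0
      (hball (by rwa [Metric.mem_closedBall, dist_eq_norm]))
    have hpair : ⟪Y i.succ - Y 0, gradient h (Y 0) - a⟫ =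
        -(h (Y i.succ) - h (Y 0) - ⟪gradient h (Y 0), Y i.succ - Y 0⟫) := by
      rw [real_inner_comm, inner_sub_left, inner_sub_right a, ← hinterp, ← hinterp]
      ring
    rw [hpair, abs_mul, abs_neg, abs_of_pos (inv_pos.2 hΔ0), inv_mul_le_iff₀ hΔ0]
    calc _ ≤ K / 2 * ‖Y i.succ - Y 0‖ ^ 2 := htaylor
      _ ≤ K / 2 * Δ ^ 2 := by gcongr
      _ = Δ * (K * Δ / 2) := by ring
  have hdet : (Δ⁻¹ • Lmat Y).det ≠ 0 := by
    rw [Matrix.det_smul]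
    exact mul_ne_zero (by positivity) hY.det_Lmat_ne_zero
  have hbase : ‖gradient h (Y 0) - a‖ ≤ specNorm (Δ⁻¹ • Lmat Y)⁻¹ * (√m * (K * Δ / 2)) := by
    refine (norm_le_specNorm_inv_mul hdet _).trans
      (mul_le_mul_of_nonneg_left ?_ (specNorm_nonneg _))
    simpa using EuclideanSpace.norm_le_sqrt_card_mul (c := K * Δ / 2)
      (v := Matrix.toEuclideanCLM (𝕜 := ℝ) (Δ⁻¹ • Lmat Y) (gradient h (Y 0) - a))
      (by positivity) fun i => by rw [toEuclideanCLM_smul_Lmat_apply]; exact hrow i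
  have hlin : ‖gradient h x - gradient h (Y 0)‖ ≤ K * Δ :=
    (hlip x (hball hx) (Y 0) hY0).trans
      (mul_le_mul_of_nonneg_left (by rwa [← dist_eq_norm, ← Metric.mem_closedBall]) hK)
  calc ‖gradient h x - a‖ = ‖(gradient h x - gradient h (Y 0)) + (gradient h (Y 0) - a)‖ := by
        rw [sub_add_sub_cancel]
    _ ≤ K * Δ + specNorm (Δ⁻¹ • Lmat Y)⁻¹ * (√m * (K * Δ / 2)) :=
        (norm_add_le _ _).trans (add_le_add hlin hbase)
    _ = K * (1 + √m * specNorm (Δ⁻¹ • Lmat Y)⁻¹ / 2) * Δ := by ring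

section LowerC2

variable {T : Type} [TopologicalSpace T] {f : EuclideanSpace ℝ (Fin m) → ℝ}
  {ft : T → EuclideanSpace ℝ (Fin m) → ℝ} {V : Set (EuclideanSpace ℝ (Fin m))}

theorem IsLowerC2Rep.differentiableAt (hrep : IsLowerC2Rep T f ft V) (hV : IsOpen V) (t : T)
    {x : EuclideanSpace ℝ (Fin m)} (hx : x ∈ V) : DifferentiableAt ℝ (ft t) x :=
  ((hrep.1 t).differentiableOn (by norm_num)).differentiableAt (hV.mem_nhds hx)

theorem IsLowerC2Rep.gradient_mem_subdiff (hrep : IsLowerC2Rep T f ft V) (hV : IsOpen V)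
    {O : Set (EuclideanSpace ℝ (Fin m))} (hf : ConvexOn ℝ O f) (hVO : V ⊆ O)
    {x : EuclideanSpace ℝ (Fin m)} (hx : x ∈ V) {t : T} (ht : ft t x = f x) :
    gradient (ft t) x ∈ subdiff O f x :=
  gradient_mem_subdiff_of_eventually_le hf (hVO hx)
    (Filter.eventually_of_mem (hV.mem_nhds hx) fun y hy => (hrep.2.2.2.2 y hy).1 t) ht
    (hrep.differentiableAt hV t hx)

theorem IsLowerC2Rep.approximate_subgradient_bounds (hrep : IsLowerC2Rep T f ft V)
    (hV : IsOpen V) {O X : Set (EuclideanSpace ℝ (Fin m))} (hf : ConvexOn ℝ O f) (hVO : V ⊆ O)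
    (hXV : X ⊆ V) (hX : Convex ℝ X) {K : ℝ} (hK : 0 ≤ K)
    (hLip : ∀ t, ∀ p ∈ X, ∀ q ∈ X, ‖gradient (ft t) p - gradient (ft t) q‖ ≤ K * ‖p - q‖)
    {L : ℝ} (hL : ∀ z ∈ X, ∀ v ∈ subdiff O f z, ‖v‖ ≤ L)
    {Y : Fin (m + 1) → EuclideanSpace ℝ (Fin m)} (hY : Poised Y) {Δ : ℝ}
    (hΔ : IsGreatest (Set.range fun i : Fin m => ‖Y i.succ - Y 0‖) Δ)
    (hball : Metric.closedBall (Y 0) Δ ⊆ X) {x : EuclideanSpace ℝ (Fin m)}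
    (hx : x ∈ Metric.closedBall (Y 0) Δ) {ι : Type*} [Fintype ι] {ts : ι → T}
    (hts : ∀ i, ft (ts i) x = f x) {lam : ι → ℝ} (hlam0 : ∀ i, 0 ≤ lam i)
    (hlamsum : ∑ i, lam i = 1) {F : ι → EuclideanSpace ℝ (Fin m) → ℝ}
    (hFaff : ∀ i, ∃ (a₀ : ℝ) (a : EuclideanSpace ℝ (Fin m)), F i = fun z => a₀ + ⟪a, z⟫)
    (hFinterp : ∀ i, ∀ j, F i (Y j) = ft (ts i) (Y j)) :
    ‖(∑ i, lam i • gradient (ft (ts i)) x) - ∑ i, lam i • gradient (F i) x‖ ≤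
        K * (1 + √m * specNorm (Δ⁻¹ • Lmat Y)⁻¹ / 2) * Δ ∧
      ‖∑ i, lam i • gradient (F i) x‖ ≤ L + K * (1 + √m * specNorm (Δ⁻¹ • Lmat Y)⁻¹ / 2) * Δ := by
  set κ := K * (1 + √m * specNorm (Δ⁻¹ • Lmat Y)⁻¹ / 2) * Δ
  have hxV : x ∈ V := hXV (hball hx)
  have herr : ∀ i, ‖gradient (ft (ts i)) x - gradient (F i) x‖ ≤ κ := fun i => by
    obtain ⟨a₀, a, hF⟩ := hFaff i
    rw [hF, gradient_const_add_inner]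
    exact norm_gradient_sub_le_of_interpolates hX
      (fun p hp => hrep.differentiableAt hV _ (hXV hp)) hK (hLip _) hY hΔ hball
      (fun j => by rw [← hFinterp i j, hF]) hx
  have hdiff : ‖(∑ i, lam i • gradient (ft (ts i)) x) - ∑ i, lam i • gradient (F i) x‖ ≤ κ := by
    simpa only [← Finset.sum_sub_distrib, ← smul_sub] using
      norm_sum_smul_le_of_norm_le hlam0 hlamsum herr
  have hgrad : ‖∑ i, lam i • gradient (ft (ts i)) x‖ ≤ L :=
    norm_sum_smul_le_of_norm_le hlam0 hlamsum fun i =>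
      hL x (hball hx) _ (hrep.gradient_mem_subdiff hV hf hVO hxV (hts i))
  refine ⟨hdiff, ?_⟩
  calc ‖∑ i, lam i • gradient (F i) x‖ = ‖(∑ i, lam i • gradient (ft (ts i)) x) -
        ((∑ i, lam i • gradient (ft (ts i)) x) - ∑ i, lam i • gradient (F i) x)‖ := by
        rw [sub_sub_cancel]
    _ ≤ L + κ := (norm_sub_le _ _).trans (add_le_add hgrad hdiff)

end LowerC2

theorem approximate_subgradient_comirror_bounds_general {m : ℕ}
    (O : Set (EuclideanSpace ℝ (Fin m)))
    (f g : EuclideanSpace ℝ (Fin m) → ℝ)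
    (hf : ConvexOn ℝ O f) (hg : ConvexOn ℝ O g)
    (X : Set (EuclideanSpace ℝ (Fin m)))
    (hXconv : Convex ℝ X)
    (O' : Set (EuclideanSpace ℝ (Fin m))) (hO'open : IsOpen O')
    (hXO' : X ⊆ O') (hO'O : O' ⊆ O)
    (Tf Tg : Type) [TopologicalSpace Tf]
    [TopologicalSpace Tg]
    (ftf : Tf → EuclideanSpace ℝ (Fin m) → ℝ)
    (ftg : Tg → EuclideanSpace ℝ (Fin m) → ℝ)
    (hrepf : IsLowerC2Rep Tf f ftf O') (hrepg : IsLowerC2Rep Tg g ftg O')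
    (Kf Kg : ℝ) (hKf0 : 0 ≤ Kf) (hKg0 : 0 ≤ Kg)
    (hLipf : ∀ t : Tf, ∀ x ∈ X, ∀ y ∈ X,
      ‖gradient (ftf t) x - gradient (ftf t) y‖ ≤ Kf * ‖x - y‖)
    (hLipg : ∀ t : Tg, ∀ x ∈ X, ∀ y ∈ X,
      ‖gradient (ftg t) x - gradient (ftg t) y‖ ≤ Kg * ‖x - y‖)
    (Lf Lg : ℝ)
    (hLf : ∀ x ∈ X, ∀ v ∈ subdiff O f x, ‖v‖ ≤ Lf)
    (hLg : ∀ x ∈ X, ∀ v ∈ subdiff O g x, ‖v‖ ≤ Lg)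
    (Y : Fin (m + 1) → EuclideanSpace ℝ (Fin m))
    (hpoised : Poised Y)
    (Δ : ℝ) (hΔ : IsGreatest (Set.range fun i : Fin m => ‖Y i.succ - Y 0‖) Δ)
    (hball : Metric.closedBall (Y 0) Δ ⊆ X)
    (ε : ℝ)
    (x : EuclideanSpace ℝ (Fin m)) (hx : x ∈ Metric.closedBall (Y 0) Δ)
    (r rbar : ℕ)
    (ts : Fin r → Tf) (hts : ∀ i, ftf (ts i) x = f x)
    (lam : Fin r → ℝ) (hlam0 : ∀ i, 0 ≤ lam i)
    (hlamsum : ∑ i, lam i = 1)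
    (tsbar : Fin rbar → Tg) (htsbar : ∀ i, ftg (tsbar i) x = g x)
    (lambar : Fin rbar → ℝ) (hlambar0 : ∀ i, 0 ≤ lambar i)
    (hlambarsum : ∑ i, lambar i = 1)
    (F : Fin r → EuclideanSpace ℝ (Fin m) → ℝ)
    (hFaff : ∀ i, ∃ (a₀ : ℝ) (a : EuclideanSpace ℝ (Fin m)),
      F i = fun z => a₀ + ⟪a, z⟫)
    (hFinterp : ∀ i, ∀ j, F i (Y j) = ftf (ts i) (Y j))
    (G : Fin rbar → EuclideanSpace ℝ (Fin m) → ℝ)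
    (hGaff : ∀ i, ∃ (a₀ : ℝ) (a : EuclideanSpace ℝ (Fin m)),
      G i = fun z => a₀ + ⟪a, z⟫)
    (hGinterp : ∀ i, ∀ j, G i (Y j) = ftg (tsbar i) (Y j))
    (vf Vf vg Vg ex Ex : EuclideanSpace ℝ (Fin m))
    (hvf : vf = ∑ i, lam i • gradient (ftf (ts i)) x)
    (hVf : Vf = ∑ i, lam i • gradient (F i) x)
    (hvg : vg = ∑ i, lambar i • gradient (ftg (tsbar i)) x)
    (hVg : Vg = ∑ i, lambar i • gradient (G i) x)
    (hex : ex = if g x ≤ ε then vf else vg)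
    (hEx : Ex = if g x ≤ ε then Vf else Vg) :
    ‖ex - Ex‖ ≤
        max Kf Kg * (1 + Real.sqrt (m : ℝ) * specNorm (Δ⁻¹ • Lmat Y)⁻¹ / 2) * Δ ∧
      ‖Ex‖ ≤ max Lf Lg +
        max Kf Kg * (1 + Real.sqrt (m : ℝ) * specNorm (Δ⁻¹ • Lmat Y)⁻¹ / 2) * Δ := by
  set c := 1 + Real.sqrt (m : ℝ) * specNorm (Δ⁻¹ • Lmat Y)⁻¹ / 2
  have hc : 0 ≤ c := by have := specNorm_nonneg (Δ⁻¹ • Lmat Y)⁻¹; positivity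
  have hΔ0 : 0 ≤ Δ := (hpoised.pos_of_isGreatest hΔ).le
  have hmono : ∀ K ≤ max Kf Kg, K * c * Δ ≤ max Kf Kg * c * Δ := fun K hK => by gcongr
  subst hvf hVf hvg hVg hex hEx
  split_ifs
  · obtain ⟨hdiff, hnorm⟩ := hrepf.approximate_subgradient_bounds hO'open hf hO'O hXO' hXconv
      hKf0 hLipf hLf hpoised hΔ hball hx hts hlam0 hlamsum hFaff hFinterp
    exact ⟨hdiff.trans (hmono _ (le_max_left _ _)),
      hnorm.trans (add_le_add (le_max_left _ _) (hmono _ (le_max_left _ _)))⟩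
  · obtain ⟨hdiff, hnorm⟩ := hrepg.approximate_subgradient_bounds hO'open hg hO'O hXO' hXconv
      hKg0 hLipg hLg hpoised hΔ hball hx htsbar hlambar0 hlambarsum hGaff hGinterp
    exact ⟨hdiff.trans (hmono _ (le_max_right _ _)),
      hnorm.trans (add_le_add (le_max_right _ _) (hmono _ (le_max_right _ _)))⟩

theorem approximate_subgradient_comirror_bounds {m : ℕ} (hm : 1 ≤ m)
    (O : Set (EuclideanSpace ℝ (Fin m))) (hOne : O.Nonempty) (hOopen : IsOpen O)
    (hOconv : Convex ℝ O)
    (f g : EuclideanSpace ℝ (Fin m) → ℝ)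
    (hf : ConvexOn ℝ O f) (hg : ConvexOn ℝ O g)
    (X : Set (EuclideanSpace ℝ (Fin m))) (hXne : X.Nonempty) (hXcpt : IsCompact X)
    (hXconv : Convex ℝ X) (hXO : X ⊆ O)
    (O' : Set (EuclideanSpace ℝ (Fin m))) (hO'open : IsOpen O')
    (hXO' : X ⊆ O') (hO'O : O' ⊆ O)
    (Tf Tg : Type) [TopologicalSpace Tf] [CompactSpace Tf]
    [TopologicalSpace Tg] [CompactSpace Tg]
    (ftf : Tf → EuclideanSpace ℝ (Fin m) → ℝ)
    (ftg : Tg → EuclideanSpace ℝ (Fin m) → ℝ)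
    (hrepf : IsLowerC2Rep Tf f ftf O') (hrepg : IsLowerC2Rep Tg g ftg O')
    (Kf Kg : ℝ) (hKf0 : 0 ≤ Kf) (hKg0 : 0 ≤ Kg)
    (hLipf : ∀ t : Tf, ∀ x ∈ X, ∀ y ∈ X,
      ‖gradient (ftf t) x - gradient (ftf t) y‖ ≤ Kf * ‖x - y‖)
    (hLipg : ∀ t : Tg, ∀ x ∈ X, ∀ y ∈ X,
      ‖gradient (ftg t) x - gradient (ftg t) y‖ ≤ Kg * ‖x - y‖)
    (Lf Lg : ℝ) (hLf0 : 0 ≤ Lf) (hLg0 : 0 ≤ Lg)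
    (hLf : ∀ x ∈ X, ∀ v ∈ subdiff O f x, ‖v‖ ≤ Lf)
    (hLg : ∀ x ∈ X, ∀ v ∈ subdiff O g x, ‖v‖ ≤ Lg)
    (Y : Fin (m + 1) → EuclideanSpace ℝ (Fin m)) (hY0 : Y 0 ∈ X)
    (hpoised : Poised Y)
    (Δ : ℝ) (hΔ : IsGreatest (Set.range fun i : Fin m => ‖Y i.succ - Y 0‖) Δ)
    (hball : Metric.closedBall (Y 0) Δ ⊆ X)
    (ε : ℝ) (hε : 0 < ε)
    (x : EuclideanSpace ℝ (Fin m)) (hx : x ∈ Metric.closedBall (Y 0) Δ)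
    (r rbar : ℕ) (hr : 1 ≤ r) (hrbar : 1 ≤ rbar)
    (ts : Fin r → Tf) (hts : ∀ i, ftf (ts i) x = f x)
    (lam : Fin r → ℝ) (hlam0 : ∀ i, 0 ≤ lam i) (hlam1 : ∀ i, lam i ≤ 1)
    (hlamsum : ∑ i, lam i = 1)
    (tsbar : Fin rbar → Tg) (htsbar : ∀ i, ftg (tsbar i) x = g x)
    (lambar : Fin rbar → ℝ) (hlambar0 : ∀ i, 0 ≤ lambar i)
    (hlambar1 : ∀ i, lambar i ≤ 1) (hlambarsum : ∑ i, lambar i = 1)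
    (F : Fin r → EuclideanSpace ℝ (Fin m) → ℝ)
    (hFaff : ∀ i, ∃ (a₀ : ℝ) (a : EuclideanSpace ℝ (Fin m)),
      F i = fun z => a₀ + ⟪a, z⟫)
    (hFinterp : ∀ i, ∀ j, F i (Y j) = ftf (ts i) (Y j))
    (G : Fin rbar → EuclideanSpace ℝ (Fin m) → ℝ)
    (hGaff : ∀ i, ∃ (a₀ : ℝ) (a : EuclideanSpace ℝ (Fin m)),
      G i = fun z => a₀ + ⟪a, z⟫)
    (hGinterp : ∀ i, ∀ j, G i (Y j) = ftg (tsbar i) (Y j))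
    (vf Vf vg Vg ex Ex : EuclideanSpace ℝ (Fin m))
    (hvf : vf = ∑ i, lam i • gradient (ftf (ts i)) x)
    (hVf : Vf = ∑ i, lam i • gradient (F i) x)
    (hvg : vg = ∑ i, lambar i • gradient (ftg (tsbar i)) x)
    (hVg : Vg = ∑ i, lambar i • gradient (G i) x)
    (hex : ex = if g x ≤ ε then vf else vg)
    (hEx : Ex = if g x ≤ ε then Vf else Vg) :
    ‖ex - Ex‖ ≤
        max Kf Kg * (1 + Real.sqrt (m : ℝ) * specNorm (Δ⁻¹ • Lmat Y)⁻¹ / 2) * Δ ∧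
      ‖Ex‖ ≤ max Lf Lg +
        max Kf Kg * (1 + Real.sqrt (m : ℝ) * specNorm (Δ⁻¹ • Lmat Y)⁻¹ / 2) * Δ :=
  approximate_subgradient_comirror_bounds_general O f g hf hg X hXconv O' hO'open hXO' hO'O Tf Tg
    ftf ftg hrepf hrepg Kf Kg hKf0 hKg0 hLipf hLipg Lf Lg hLf hLg Y hpoised Δ hΔ hball ε x hx r rbar
    ts hts lam hlam0 hlamsum tsbar htsbar lambar hlambar0 hlambarsum F hFaff hFinterp G hGaff
    hGinterp vf Vf vg Vg ex Ex hvf hVf hvg hVg hex hEx
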